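/- For c > 0, integers k ≥ 1, h ≥ 0, and ε > 0, the ratio of the second-moment integral to the normalizing integral satisfies n^{1/k} · (∫_{-ε}^{ε} u² e^{-n c u^{2k}} |u|^h du) / (∫_{-ε}^{ε} e^{-n c u^{2k}} |u|^h du) → B/A as n → ∞, where A = ∫_ℝ e^{-c t^{2k}} |t|^h dt and B = ∫_ℝ t² e^{-c t^{2k}} |t|^h dt. -/

import Mathlib

/-!
Substituting `u = t / r` with `r = n ^ (1 / (2k))` turns `∫_{-ε}^{ε} e^{-n c u^{2k}} |u|^m du` into
`r^{-(m+1)} ∫_{-rε}^{rε} e^{-c t^{2k}} |t|^m dt`, and the truncated integral converges to the full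
one as `r → ∞`. Numerator and denominator are the cases `m = h + 2` and `m = h`, so after the
factor `n^{1/k} = r^2` the powers of `r` cancel in the ratio.
-/

open MeasureTheory Filter Set
open scoped Topology

lemma integrable_of_even_of_integrableOn_Ioi {f : ℝ → ℝ} (heven : ∀ x, f (-x) = f x)
    (hf : IntegrableOn f (Ioi 0)) : Integrable f := by
  have hIic : IntegrableOn f (Iic 0) := by
    have hneg : MeasurableEmbedding fun x : ℝ => -x := (Homeomorph.neg ℝ).measurableEmbedding
    rw [← Measure.map_neg_eq_self (volume : Measure ℝ), hneg.integrableOn_map_iff]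
    simp_rw [Function.comp_def, heven, neg_preimage, neg_Iic, neg_zero]
    exact (integrableOn_Ici_iff_integrableOn_Ioi).mpr hf
  simpa only [Iic_union_Ioi, integrableOn_univ] using hIic.union hf

lemma integrable_exp_neg_mul_pow_mul_abs_pow {c : ℝ} (hc : 0 < c) {k : ℕ} (hk : 1 ≤ k) (m : ℕ) :
    Integrable (fun t : ℝ => Real.exp (-c * t ^ (2 * k)) * |t| ^ m) := by
  refine integrable_of_even_of_integrableOn_Ioi
    (fun x => by simp only [(even_two_mul k).neg_pow, abs_neg]) ?_
  have hIoi := integrableOn_rpow_mul_exp_neg_mul_rpow (p := ((2 * k : ℕ) : ℝ)) (s := m)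
    (by linarith [m.cast_nonneg (α := ℝ)]) (by norm_cast; omega) hc
  refine hIoi.congr_fun (fun x (hx : 0 < x) => ?_) measurableSet_Ioi
  simp only [Real.rpow_natCast, abs_of_pos hx]
  ring

lemma integral_exp_neg_mul_pow_mul_abs_pow_pos {c : ℝ} (hc : 0 < c) {k : ℕ} (hk : 1 ≤ k) (m : ℕ) :
    0 < ∫ t : ℝ, Real.exp (-c * t ^ (2 * k)) * |t| ^ m := by
  rw [integral_pos_iff_support_of_nonneg (fun t => by positivity)
    (integrable_exp_neg_mul_pow_mul_abs_pow hc hk m)]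
  have hsupp : Ioi (0 : ℝ) ⊆ Function.support fun t : ℝ => Real.exp (-c * t ^ (2 * k)) * |t| ^ m :=
    fun t (ht : 0 < t) => by
      have : 0 < |t| := abs_pos.mpr ht.ne'
      exact (by positivity : 0 < Real.exp (-c * t ^ (2 * k)) * |t| ^ m).ne'
  calc (0 : ENNReal) < volume (Ioi (0 : ℝ)) := by simp
    _ ≤ _ := measure_mono hsupp

lemma integral_exp_neg_mul_pow_mul_abs_pow_rescale (c : ℝ) (k m : ℕ) (ε : ℝ) {r : ℝ}
    (hr : 0 ≤ r) :
    ∫ t in (-(r * ε))..(r * ε), Real.exp (-c * t ^ (2 * k)) * |t| ^ m =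
      r ^ (m + 1) * ∫ u in (-ε)..ε, Real.exp (-(r ^ (2 * k)) * c * u ^ (2 * k)) * |u| ^ m := by
  rw [← mul_neg, ← intervalIntegral.smul_integral_comp_mul_left
      (fun t : ℝ => Real.exp (-c * t ^ (2 * k)) * |t| ^ m) r, smul_eq_mul, pow_succ',
    mul_assoc]
  congr 1
  rw [← intervalIntegral.integral_const_mul]
  refine intervalIntegral.integral_congr fun u _ => ?_
  simp only [mul_pow, abs_mul, abs_of_nonneg hr]
  ring_nf

lemma tendsto_rpow_mul_integral_exp_neg_mul_pow_mul_abs_pow {c : ℝ} (hc : 0 < c) {k : ℕ}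
    (hk : 1 ≤ k) (m : ℕ) {ε : ℝ} (hε : 0 < ε) :
    Tendsto (fun n : ℝ => n ^ (((m : ℝ) + 1) / (2 * k)) *
        ∫ u in (-ε)..ε, Real.exp (-n * c * u ^ (2 * k)) * |u| ^ m)
      atTop (𝓝 (∫ t : ℝ, Real.exp (-c * t ^ (2 * k)) * |t| ^ m)) := by
  have hk0 : (0 : ℝ) < k := by exact_mod_cast hk
  set r : ℝ → ℝ := fun n => n ^ ((1 : ℝ) / (2 * k))
  have hr : Tendsto (fun n => r n * ε) atTop atTop :=
    (tendsto_rpow_atTop (by positivity)).atTop_mul_const hε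
  refine (intervalIntegral_tendsto_integral (integrable_exp_neg_mul_pow_mul_abs_pow hc hk m)
    (tendsto_neg_atTop_atBot.comp hr) hr).congr' ?_
  filter_upwards [eventually_gt_atTop 0] with n hn
  have hrn : 0 < r n := Real.rpow_pos_of_pos hn _
  have hpow (j : ℕ) : r n ^ j = n ^ ((j : ℝ) / (2 * k)) := by
    rw [← Real.rpow_natCast, ← Real.rpow_mul hn.le, one_div_mul_eq_div]
  have hn_eq : n = r n ^ (2 * k) := by
    rw [hpow]; push_cast; rw [div_self (by positivity), Real.rpow_one]
  rw [Function.comp_apply, integral_exp_neg_mul_pow_mul_abs_pow_rescale c k m ε hrn.le, ← hn_eq,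
    hpow, Nat.cast_add_one]

/-- Posterior mean-squared-error scaling in one dimension: the ratio of the
second-moment integral to the normalizing integral, multiplied by n^{1/k},
converges to B/A with A = ∫_ℝ e^{-c t^{2k}}|t|^h dt and
B = ∫_ℝ t² e^{-c t^{2k}}|t|^h dt. -/
theorem posterior_second_moment_scaling
    (c : ℝ) (hc : 0 < c) (k : ℕ) (hk : 1 ≤ k) (h : ℕ) (ε : ℝ) (hε : 0 < ε) :
    Tendsto
      (fun n : ℕ =>
        (n : ℝ) ^ ((1 : ℝ) / k) *
          ((∫ u in (-ε)..ε, u ^ 2 * Real.exp (-(n : ℝ) * c * u ^ (2 * k)) * |u| ^ h) /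
            (∫ u in (-ε)..ε, Real.exp (-(n : ℝ) * c * u ^ (2 * k)) * |u| ^ h)))
      atTop
      (nhds ((∫ t : ℝ, t ^ 2 * Real.exp (-c * t ^ (2 * k)) * |t| ^ h) /
        (∫ t : ℝ, Real.exp (-c * t ^ (2 * k)) * |t| ^ h))) := by
  have hsq (a t : ℝ) : t ^ 2 * Real.exp a * |t| ^ h = Real.exp a * |t| ^ (h + 2) := by
    rw [pow_add, sq_abs]; ring
  have hlim (m : ℕ) := (tendsto_rpow_mul_integral_exp_neg_mul_pow_mul_abs_pow hc hk m hε).comp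
    tendsto_natCast_atTop_atTop
  simp_rw [hsq]
  refine ((hlim (h + 2)).div (hlim h)
    (integral_exp_neg_mul_pow_mul_abs_pow_pos hc hk h).ne').congr' ?_
  filter_upwards [eventually_gt_atTop 0] with n hn_pos
  have hn : (0 : ℝ) < n := by exact_mod_cast hn_pos
  have hexp : (n : ℝ) ^ ((((h + 2 : ℕ) : ℝ) + 1) / (2 * k)) =
      (n : ℝ) ^ ((1 : ℝ) / k) * (n : ℝ) ^ (((h : ℝ) + 1) / (2 * k)) := by
    rw [← Real.rpow_add hn]; congr 1; field_simp; push_cast; ring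
  simp only [Pi.div_apply, Function.comp_apply, hexp]
  rw [mul_assoc, mul_div_assoc, mul_div_mul_left _ _ (Real.rpow_pos_of_pos hn _).ne']
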